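/- arXiv:2105.04600 — 2 statements merged into one kernel-verified Lean document; each statement's English description precedes it below -/
import Mathlib

section
/- Let u be harmonic-type in the sense that it satisfies −Δu = f/a with constant coefficient a ≠ 0 near a point. Then for every pair (m', n') with m' ≥ 2, one has u^{(m',n')} = (−1)^{⌊m'/2⌋} u^{(odd(m'), n'+m'−odd(m'))} + Σ_{ℓ=1}^{⌊m'/2⌋} (−1)^ℓ f^{(m'−2ℓ, n'+2ℓ−2)}/a, where g^{(m,n)} denotes the (m,n)-th partial derivative at the point and odd(m') ∈ {0,1} is the parity of m'. -/
/-!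
Applying `∂ₓᵐ∂ᵧⁿ` to the equation `u_xx = -u_yy - f/a`, which holds on a neighbourhood of
the point, gives the recurrence `u^(m+2,n) = -u^(m,n+2) - f^(m,n)/a`, since partial
derivatives of smooth functions commute and depend only on the germ. Iterating it `⌊m/2⌋`
times trades each pair of `x`-derivatives for a pair of `y`-derivatives at the cost of one
`f`-term.
-/

noncomputable def pdx (f : ℝ → ℝ → ℝ) : ℝ → ℝ → ℝ := fun x y => deriv (fun t => f t y) x

noncomputable def pdy (f : ℝ → ℝ → ℝ) : ℝ → ℝ → ℝ := fun x y => deriv (fun t => f x t) y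

/-- The iterated partial derivative `∂^{m+n}/∂x^m∂y^n`. -/
noncomputable def pd (m n : ℕ) (f : ℝ → ℝ → ℝ) : ℝ → ℝ → ℝ := pdx^[m] (pdy^[n] f)

open Function Filter
open scoped ContDiff Topology

section FirstOrder

variable {f g : ℝ → ℝ → ℝ}

theorem hasDerivAt_slice_fst (hf : Differentiable ℝ (uncurry f)) (x y : ℝ) :
    HasDerivAt (fun t => f t y) (fderiv ℝ (uncurry f) (x, y) (1, 0)) x :=
  (hf (x, y)).hasFDerivAt.comp_hasDerivAt (f := fun t => (t, y)) x
    ((hasDerivAt_id x).prodMk (hasDerivAt_const x y))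

theorem hasDerivAt_slice_snd (hf : Differentiable ℝ (uncurry f)) (x y : ℝ) :
    HasDerivAt (fun t => f x t) (fderiv ℝ (uncurry f) (x, y) (0, 1)) y :=
  (hf (x, y)).hasFDerivAt.comp_hasDerivAt (f := fun t => (x, t)) y
    ((hasDerivAt_const y x).prodMk (hasDerivAt_id y))

theorem uncurry_pdx (hf : Differentiable ℝ (uncurry f)) :
    uncurry (pdx f) = fun p => fderiv ℝ (uncurry f) p (1, 0) :=
  funext fun p => (hasDerivAt_slice_fst hf p.1 p.2).deriv

theorem uncurry_pdy (hf : Differentiable ℝ (uncurry f)) :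
    uncurry (pdy f) = fun p => fderiv ℝ (uncurry f) p (0, 1) :=
  funext fun p => (hasDerivAt_slice_snd hf p.1 p.2).deriv

theorem contDiff_pdx {k n : WithTop ℕ∞} (hf : ContDiff ℝ n (uncurry f)) (hk : k + 1 ≤ n) :
    ContDiff ℝ k (uncurry (pdx f)) := by
  rw [uncurry_pdx ((hf.of_le hk).differentiable (by simp))]
  exact (hf.fderiv_right hk).clm_apply contDiff_const

theorem contDiff_pdy {k n : WithTop ℕ∞} (hf : ContDiff ℝ n (uncurry f)) (hk : k + 1 ≤ n) :
    ContDiff ℝ k (uncurry (pdy f)) := by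
  rw [uncurry_pdy ((hf.of_le hk).differentiable (by simp))]
  exact (hf.fderiv_right hk).clm_apply contDiff_const

theorem pdx_pdy_comm (hf : ContDiff ℝ 2 (uncurry f)) : pdx (pdy f) = pdy (pdx f) := by
  have hd : Differentiable ℝ (uncurry f) := hf.differentiable (by simp)
  funext x y
  have hd2 : DifferentiableAt ℝ (fderiv ℝ (uncurry f)) (x, y) :=
    (hf.fderiv_right (m := 1) (by norm_num)).differentiable one_ne_zero (x, y)
  have second (v w : ℝ × ℝ) : fderiv ℝ (fun p => fderiv ℝ (uncurry f) p v) (x, y) w =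
      fderiv ℝ (fderiv ℝ (uncurry f)) (x, y) w v := by
    rw [fderiv_clm_apply hd2 (differentiableAt_const v)]
    simp
  have hxy := congrFun (uncurry_pdx
    ((contDiff_pdy (k := 1) hf (by norm_num)).differentiable one_ne_zero)) (x, y)
  have hyx := congrFun (uncurry_pdy
    ((contDiff_pdx (k := 1) hf (by norm_num)).differentiable one_ne_zero)) (x, y)
  simp only [uncurry_apply_pair, uncurry_pdx hd, uncurry_pdy hd] at hxy hyx
  rw [hxy, hyx, second, second, (hf.contDiffAt.isSymmSndFDerivAt (by simp)).eq]

end FirstOrder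

section Smooth

variable {f : ℝ → ℝ → ℝ}

theorem contDiff_iterate_pdx (hf : ContDiff ℝ ∞ (uncurry f)) (m : ℕ) :
    ContDiff ℝ ∞ (uncurry (pdx^[m] f)) :=
  Set.MapsTo.iterate (s := {g | ContDiff ℝ ∞ (uncurry g)})
    (fun g (hg : ContDiff ℝ ∞ (uncurry g)) => contDiff_pdx hg ENat.coe_top_add_one.le) m hf

theorem contDiff_iterate_pdy (hf : ContDiff ℝ ∞ (uncurry f)) (n : ℕ) :
    ContDiff ℝ ∞ (uncurry (pdy^[n] f)) :=
  Set.MapsTo.iterate (s := {g | ContDiff ℝ ∞ (uncurry g)})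
    (fun g (hg : ContDiff ℝ ∞ (uncurry g)) => contDiff_pdy hg ENat.coe_top_add_one.le) n hf

theorem contDiff_pd (hf : ContDiff ℝ ∞ (uncurry f)) (m n : ℕ) :
    ContDiff ℝ ∞ (uncurry (pd m n f)) :=
  contDiff_iterate_pdx (contDiff_iterate_pdy hf n) m

theorem pdx_iterate_pdy_comm (hf : ContDiff ℝ ∞ (uncurry f)) (n : ℕ) :
    pdx (pdy^[n] f) = pdy^[n] (pdx f) := by
  induction n with
  | zero => rfl
  | succ n ih =>
    rw [iterate_succ_apply', pdx_pdy_comm ((contDiff_iterate_pdy hf n).of_le (by norm_cast)), ih,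
      iterate_succ_apply']

theorem iterate_pdx_iterate_pdy_comm (hf : ContDiff ℝ ∞ (uncurry f)) (m n : ℕ) :
    pdx^[m] (pdy^[n] f) = pdy^[n] (pdx^[m] f) := by
  induction m with
  | zero => rfl
  | succ m ih =>
    rw [iterate_succ_apply', ih, pdx_iterate_pdy_comm (contDiff_iterate_pdx hf m),
      iterate_succ_apply']

theorem pd_pd (hf : ContDiff ℝ ∞ (uncurry f)) (m n m' n' : ℕ) :
    pd m n (pd m' n' f) = pd (m + m') (n + n') f := by
  rw [pd, pd, ← iterate_pdx_iterate_pdy_comm (contDiff_iterate_pdy hf n'), ← iterate_add_apply,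
    ← iterate_add_apply, pd]

end Smooth

section Linear

variable {f g : ℝ → ℝ → ℝ}

theorem pdx_add (hf : Differentiable ℝ (uncurry f)) (hg : Differentiable ℝ (uncurry g)) :
    pdx (f + g) = pdx f + pdx g :=
  funext₂ fun x y =>
    deriv_add (hasDerivAt_slice_fst hf x y).differentiableAt
      (hasDerivAt_slice_fst hg x y).differentiableAt

theorem pdy_add (hf : Differentiable ℝ (uncurry f)) (hg : Differentiable ℝ (uncurry g)) :
    pdy (f + g) = pdy f + pdy g :=
  funext₂ fun x y =>
    deriv_add (hasDerivAt_slice_snd hf x y).differentiableAt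
      (hasDerivAt_slice_snd hg x y).differentiableAt

theorem pd_add (hf : ContDiff ℝ ∞ (uncurry f)) (hg : ContDiff ℝ ∞ (uncurry g)) (m n : ℕ) :
    pd m n (f + g) = pd m n f + pd m n g := by
  have hy : pdy^[n] (f + g) = pdy^[n] f + pdy^[n] g := by
    induction n with
    | zero => rfl
    | succ n ih =>
      simp only [iterate_succ_apply', ih]
      exact pdy_add ((contDiff_iterate_pdy hf n).differentiable (by simp))
        ((contDiff_iterate_pdy hg n).differentiable (by simp))
  induction m with
  | zero => exact hy
  | succ m ih =>
    simp only [pd, iterate_succ_apply'] at ih ⊢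
    rw [ih]
    exact pdx_add ((contDiff_pd hf m n).differentiable (by simp))
      ((contDiff_pd hg m n).differentiable (by simp))

theorem commute_pdx_smul (c : ℝ) : Function.Commute pdx (c • ·) := by
  intro f
  funext x y
  exact congrFun (deriv_const_mul_field' (v := fun t => f t y) c) x

theorem commute_pdy_smul (c : ℝ) : Function.Commute pdy (c • ·) := by
  intro f
  funext x y
  exact congrFun (deriv_const_mul_field' (v := fun t => f x t) c) y

theorem pd_smul (c : ℝ) (f : ℝ → ℝ → ℝ) (m n : ℕ) : pd m n (c • f) = c • pd m n f := by
  rw [pd, ((commute_pdy_smul c).iterate_left n).eq, ((commute_pdx_smul c).iterate_left m).eq, pd]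

end Linear

section Local

variable {f g : ℝ → ℝ → ℝ} {p : ℝ × ℝ}

theorem Filter.EventuallyEq.uncurry_pdx (h : uncurry f =ᶠ[𝓝 p] uncurry g) :
    uncurry (pdx f) =ᶠ[𝓝 p] uncurry (pdx g) := by
  filter_upwards [h.eventuallyEq_nhds] with q hq
  exact (hq.comp_tendsto (Continuous.tendsto (by fun_prop) q.1 :
    Tendsto (fun t => (t, q.2)) (𝓝 q.1) (𝓝 q))).deriv_eq

theorem Filter.EventuallyEq.uncurry_pdy (h : uncurry f =ᶠ[𝓝 p] uncurry g) :
    uncurry (pdy f) =ᶠ[𝓝 p] uncurry (pdy g) := by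
  filter_upwards [h.eventuallyEq_nhds] with q hq
  exact (hq.comp_tendsto (Continuous.tendsto (by fun_prop) q.2 :
    Tendsto (fun t => (q.1, t)) (𝓝 q.2) (𝓝 q))).deriv_eq

theorem Filter.EventuallyEq.uncurry_pd (h : uncurry f =ᶠ[𝓝 p] uncurry g) (m n : ℕ) :
    uncurry (pd m n f) =ᶠ[𝓝 p] uncurry (pd m n g) := by
  have hy : uncurry (pdy^[n] f) =ᶠ[𝓝 p] uncurry (pdy^[n] g) := by
    induction n with
    | zero => exact h
    | succ n ih => simpa only [iterate_succ_apply'] using ih.uncurry_pdy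
  induction m with
  | zero => exact hy
  | succ m ih => simpa only [pd, iterate_succ_apply'] using ih.uncurry_pdx

end Local

theorem pd_add_two_eq_of_laplacian_eventuallyEq {u f : ℝ → ℝ → ℝ} {p : ℝ × ℝ} {c : ℝ}
    (hu : ContDiff ℝ ∞ (uncurry u))
    (hΔ : uncurry (pd 2 0 u + pd 0 2 u) =ᶠ[𝓝 p] uncurry (c • f)) (m n : ℕ) :
    pd (m + 2) n u p.1 p.2 = -pd m (n + 2) u p.1 p.2 + c * pd m n f p.1 p.2 := by
  have h := (hΔ.uncurry_pd m n).eq_of_nhds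
  rw [pd_add (contDiff_pd hu 2 0) (contDiff_pd hu 0 2), pd_smul, pd_pd hu, pd_pd hu] at h
  simp only [uncurry, Pi.add_apply, Pi.smul_apply, smul_eq_mul, add_zero] at h
  linarith

theorem eq_of_two_step_recurrence {U F : ℕ → ℕ → ℝ}
    (h : ∀ m n, U (m + 2) n = -U m (n + 2) - F m n) (m n : ℕ) :
    U m n = (-1) ^ (m / 2) * U (m % 2) (n + m - m % 2) +
      ∑ ℓ ∈ Finset.Icc 1 (m / 2), (-1) ^ ℓ * F (m - 2 * ℓ) (n + 2 * ℓ - 2) := by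
  have key (k r : ℕ) : U (2 * k + r) n = (-1) ^ k * U r (n + 2 * k) +
      ∑ ℓ ∈ Finset.Icc 1 k, (-1) ^ ℓ * F (2 * k + r - 2 * ℓ) (n + 2 * ℓ - 2) := by
    induction k generalizing r with
    | zero => simp
    | succ k ih =>
      rw [Finset.sum_Icc_succ_top (by omega), show 2 * (k + 1) + r = 2 * k + (r + 2) by ring,
        ih, h, show 2 * k + (r + 2) - 2 * (k + 1) = r by omega,
        show n + 2 * (k + 1) - 2 = n + 2 * k by omega, show n + 2 * (k + 1) = n + 2 * k + 2 by ring]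
      ring
  have := key (m / 2) (m % 2)
  rwa [Nat.div_add_mod, show n + 2 * (m / 2) = n + m - m % 2 by omega] at this

theorem high_deriv_identity_general (a : ℝ) (ha : a ≠ 0) (u f : ℝ → ℝ → ℝ)
    (hu : ContDiff ℝ (⊤ : ℕ∞) fun p : ℝ × ℝ => u p.1 p.2)
    (xs ys : ℝ) (s : Set (ℝ × ℝ)) (hs : s ∈ nhds (xs, ys))
    (heq : ∀ p ∈ s, a * (pd 2 0 u p.1 p.2 + pd 0 2 u p.1 p.2) = - f p.1 p.2)
    (m' n' : ℕ) :
    pd m' n' u xs ys =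
      (-1 : ℝ) ^ (m' / 2) * pd (m' % 2) (n' + m' - m' % 2) u xs ys +
        ∑ ℓ ∈ Finset.Icc 1 (m' / 2),
          (-1 : ℝ) ^ ℓ * pd (m' - 2 * ℓ) (n' + 2 * ℓ - 2) f xs ys / a := by
  have hΔ : uncurry (pd 2 0 u + pd 0 2 u) =ᶠ[𝓝 (xs, ys)] uncurry ((-a⁻¹) • f) := by
    filter_upwards [hs] with p hp
    simp only [uncurry, Pi.add_apply, Pi.smul_apply, smul_eq_mul]
    field_simp
    linarith [heq p hp]
  simp only [mul_div_assoc]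
  refine eq_of_two_step_recurrence (U := fun m n => pd m n u xs ys)
    (F := fun m n => pd m n f xs ys / a) (fun m n => ?_) m' n'
  rw [pd_add_two_eq_of_laplacian_eventuallyEq hu hΔ]
  ring

/-- If `u` satisfies `a(u_xx + u_yy) = -f` with nonzero constant `a` near a point,
then for every `(m',n')` with `m' ≥ 2`,
`u^{(m',n')} = (-1)^{⌊m'/2⌋} u^{(odd(m'), n'+m'-odd(m'))}
+ Σ_{ℓ=1}^{⌊m'/2⌋} (-1)^ℓ f^{(m'-2ℓ, n'+2ℓ-2)}/a`. -/
theorem high_deriv_identity (a : ℝ) (ha : a ≠ 0) (u f : ℝ → ℝ → ℝ)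
    (hu : ContDiff ℝ (⊤ : ℕ∞) fun p : ℝ × ℝ => u p.1 p.2)
    (hf : ContDiff ℝ (⊤ : ℕ∞) fun p : ℝ × ℝ => f p.1 p.2)
    (xs ys : ℝ) (s : Set (ℝ × ℝ)) (hs : s ∈ nhds (xs, ys))
    (heq : ∀ p ∈ s, a * (pd 2 0 u p.1 p.2 + pd 0 2 u p.1 p.2) = - f p.1 p.2)
    (m' n' : ℕ) (hm : 2 ≤ m') :
    pd m' n' u xs ys =
      (-1 : ℝ) ^ (m' / 2) * pd (m' % 2) (n' + m' - m' % 2) u xs ys +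
        ∑ ℓ ∈ Finset.Icc 1 (m' / 2),
          (-1 : ℝ) ^ ℓ * pd (m' - 2 * ℓ) (n' + 2 * ℓ - 2) f xs ys / a :=
  high_deriv_identity_general a ha u f hu xs ys s hs heq m' n'
end

section
/- Let r, s : (−ε, ε) → ℝ be smooth with r(0) = s(0) = 0 and (r'(0))² + (s'(0))² > 0, and a₀ ≠ 0. For p ≥ 1, define g_{m,n,p} := (1/p!) dᵖ/dtᵖ [G_{m,n}(r(t), s(t))] at t = 0 and g̃_{m,n,p−1} := (a₀/(p−1)!) d^{p−1}/dt^{p−1} [∇G_{m,n}(r(t),s(t)) · (s'(t), −r'(t))] at t = 0, where G_{m,n}(x,y) := Σ_{ℓ=0}^{⌊n/2⌋} (−1)^ℓ x^{m+2ℓ}y^{n−2ℓ}/((m+2ℓ)!(n−2ℓ)!). Then for every p = 1,…,M: g_{0,p,p}·g̃_{1,p−1,p−1} − g_{1,p−1,p}·g̃_{0,p,p−1} > 0. -/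
noncomputable def G (m n : ℕ) : ℝ → ℝ → ℝ := fun x y =>
  ∑ ℓ ∈ Finset.range (n / 2 + 1),
    (-1 : ℝ) ^ ℓ * x ^ (m + 2 * ℓ) * y ^ (n - 2 * ℓ) /
      ((Nat.factorial (m + 2 * ℓ) : ℝ) * (Nat.factorial (n - 2 * ℓ) : ℝ))

/-- `g_{m,n,p} = (1/p!) dᵖ/dtᵖ [G_{m,n}(r(t), s(t))]|_{t=0}`. -/
noncomputable def gcoef (r s : ℝ → ℝ) (m n p : ℕ) : ℝ :=
  (1 / (Nat.factorial p : ℝ)) * iteratedDeriv p (fun t => G m n (r t) (s t)) 0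

/-- `g̃_{m,n,p} = (a₀/p!) dᵖ/dtᵖ [∇G_{m,n}(r(t),s(t)) · (s'(t), -r'(t))]|_{t=0}`. -/
noncomputable def gtcoef (a₀ : ℝ) (r s : ℝ → ℝ) (m n p : ℕ) : ℝ :=
  (a₀ / (Nat.factorial p : ℝ)) *
    iteratedDeriv p
      (fun t => pdx (G m n) (r t) (s t) * deriv s t - pdy (G m n) (r t) (s t) * deriv r t) 0

/-!
Put `z = y + x i`. Then `G_{m,n}(x, y) = Re ((-i)^m z^(m+n) / (m+n)!)` for `m ≤ 1`, so that
`G_{0,n} = Re z^n / n!` and `G_{1,n} = Im z^(n+1) / (n+1)!`, and by the Cauchy–Riemann equations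
`∇G · (u, -v) = Re (i f'(z) (u + v i))` whenever `G = Re ∘ f`. Along the complexified curve
`w = s + r i`, which vanishes at `0`, the `j`-th derivative of `w^j u` at `0` is `j! w'(0)^j u(0)`.
With `W = w'(0)` this gives `g_{0,p,p} = Re W^p / p!`, `g_{1,p-1,p} = Im W^p / p!`,
`g̃_{1,p-1,p-1} = a₀ Re W^p / (p-1)!` and `g̃_{0,p,p-1} = -a₀ Im W^p / (p-1)!`, so the determinant
is `a₀ |W|^(2p) / (p! (p-1)!)`, positive because `W ≠ 0`.
-/

open Complex Nat Finset Filter Topology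
open scoped ContDiff

theorem ContinuousLinearMap.iteratedDeriv_comp_left {𝕜 E F : Type*} [NontriviallyNormedField 𝕜]
    [NormedAddCommGroup E] [NormedSpace 𝕜 E] [NormedAddCommGroup F] [NormedSpace 𝕜 F]
    (L : E →L[𝕜] F) {f : 𝕜 → E} {x : 𝕜} {n : ℕ} (hf : ContDiffAt 𝕜 n f x) :
    iteratedDeriv n (fun t => L (f t)) x = L (iteratedDeriv n f x) := by
  rw [iteratedDeriv_eq_iteratedFDeriv, iteratedDeriv_eq_iteratedFDeriv]
  exact congrArg (fun g => g fun _ => (1 : 𝕜)) (L.iteratedFDeriv_comp_left hf le_rfl)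

section PowMul

variable {A : Type*} [NormedCommRing A] [NormedAlgebra ℝ A] {U : Set ℝ} {a : ℝ}

theorem iteratedDeriv_pow_mul_of_eq_zero (hU : IsOpen U) (ha : a ∈ U) {w : ℝ → A}
    (hw : ContDiffOn ℝ ∞ w U) (hwa : w a = 0) {k j : ℕ} (hkj : k ≤ j) {u : ℝ → A}
    (hu : ContDiffOn ℝ ∞ u U) :
    iteratedDeriv k (fun t => w t ^ j * u t) a =
      if k = j then (j ! : A) * deriv w a ^ j * u a else 0 := by
  induction k generalizing j u with
  | zero =>
    rcases j.eq_zero_or_pos with rfl | hj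
    · simp
    · simp [hwa, zero_pow hj.ne', hj.ne]
  | succ k ih =>
    obtain ⟨j, rfl⟩ : ∃ i, j = i + 1 := ⟨j - 1, by omega⟩
    have hdiff : ∀ {f : ℝ → A}, ContDiffOn ℝ ∞ f U → ∀ t ∈ U, DifferentiableAt ℝ f t :=
      fun hf t ht => (hf.contDiffAt (hU.mem_nhds ht)).differentiableAt (by simp)
    have hderiv : deriv (fun t => w t ^ (j + 1) * u t) =ᶠ[𝓝 a]
        fun t => w t ^ j * ((j + 1 : A) * deriv w t * u t + w t * deriv u t) := by
      filter_upwards [hU.mem_nhds ha] with t ht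
      rw [((hdiff hw t ht).hasDerivAt.fun_pow (j + 1) |>.fun_mul (hdiff hu t ht).hasDerivAt).deriv]
      push_cast [Nat.add_sub_cancel]
      ring
    have hu' : ContDiffOn ℝ ∞ (fun t => (j + 1 : A) * deriv w t * u t + w t * deriv u t) U :=
      ((contDiffOn_const.mul (hw.deriv_of_isOpen hU le_rfl)).mul hu).add
        (hw.mul (hu.deriv_of_isOpen hU le_rfl))
    rw [iteratedDeriv_succ', hderiv.iteratedDeriv_eq, ih (by omega) hu']
    by_cases hkj : k = j
    · subst hkj
      simp only [hwa, zero_mul, add_zero, factorial_succ]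
      push_cast
      ring
    · rw [if_neg hkj, if_neg (by omega)]

theorem iteratedDeriv_pow_mul_self (hU : IsOpen U) (ha : a ∈ U) {w : ℝ → A}
    (hw : ContDiffOn ℝ ∞ w U) (hwa : w a = 0) (j : ℕ) {u : ℝ → A} (hu : ContDiffOn ℝ ∞ u U) :
    iteratedDeriv j (fun t => w t ^ j * u t) a = (j ! : A) * deriv w a ^ j * u a := by
  simpa using iteratedDeriv_pow_mul_of_eq_zero hU ha hw hwa le_rfl hu

end PowMul

theorem add_mul_I_pow_div_factorial (x y : ℝ) (N : ℕ) :
    ((y + x * I) ^ N / N ! : ℂ) =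
      ∑ k ∈ range (N + 1), ((x ^ k * y ^ (N - k) / (k ! * (N - k)!) : ℝ) : ℂ) * I ^ k := by
  rw [add_comm, add_pow, sum_div]
  refine sum_congr rfl fun k hk => ?_
  rw [cast_choose ℂ (Nat.lt_succ_iff.mp (mem_range.mp hk)), mul_pow]
  have : (N ! : ℂ) ≠ 0 := by exact_mod_cast (factorial_pos N).ne'
  push_cast
  field_simp

theorem re_neg_I_pow_mul_I_pow (m ℓ : ℕ) : ((-I) ^ m * I ^ (m + 2 * ℓ)).re = (-1) ^ ℓ := by
  rw [pow_add, ← mul_assoc, ← mul_pow, neg_mul, I_mul_I, neg_neg, one_pow, one_mul, pow_mul,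
    I_sq]
  norm_cast

theorem re_neg_I_pow_mul_I_pow_of_odd {m k : ℕ} (h : Odd (m + k)) :
    ((-I) ^ m * I ^ k).re = 0 := by
  obtain ⟨j, hj⟩ := h
  have : (-I) ^ m * I ^ k = (((-1) ^ (m + j) : ℝ) : ℂ) * I := by
    rw [neg_pow, mul_assoc, ← pow_add, hj, pow_succ, pow_mul, I_sq]
    push_cast
    ring
  rw [this, re_ofReal_mul, I_re, mul_zero]

theorem G_eq_re {m : ℕ} (hm : m ≤ 1) (n : ℕ) (x y : ℝ) :
    G m n x y = ((-I) ^ m * (y + x * I) ^ (m + n) / (m + n)! : ℂ).re := by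
  rw [mul_div_assoc, add_mul_I_pow_div_factorial, mul_sum, re_sum]
  set f : ℕ → ℝ := fun k =>
    ((-I) ^ m * (((x ^ k * y ^ (m + n - k) / (k ! * (m + n - k)!) : ℝ) : ℂ) * I ^ k)).re
  have hsub : (range (n / 2 + 1)).image (m + 2 * ·) ⊆ range (m + n + 1) := by
    intro k; simp only [mem_image, mem_range]; omega
  have hzero : ∀ k ∈ range (m + n + 1), k ∉ (range (n / 2 + 1)).image (m + 2 * ·) → f k = 0 := by
    intro k hk hk'
    simp only [f]
    rw [mul_left_comm, re_ofReal_mul, re_neg_I_pow_mul_I_pow_of_odd, mul_zero]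
    rw [← Nat.not_even_iff_odd]
    rintro ⟨j, hj⟩
    simp only [mem_image, mem_range, not_exists, not_and] at hk hk'
    exact hk' ((k - m) / 2) (by omega) (by omega)
  rw [← sum_subset hsub hzero, sum_image (fun _ _ _ _ h => by simpa using h)]
  refine sum_congr rfl fun ℓ hℓ => ?_
  simp only [f]
  rw [mul_left_comm, re_ofReal_mul, re_neg_I_pow_mul_I_pow,
    show m + n - (m + 2 * ℓ) = n - 2 * ℓ by omega]
  ring

theorem pdx_mul_sub_pdy_mul_eq_re {F : ℝ → ℝ → ℝ} {f : ℂ → ℂ}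
    (hF : ∀ x y, F x y = (f (y + x * I)).re) {f' : ℂ} {x y : ℝ}
    (hf : HasDerivAt f f' (y + x * I)) (u v : ℝ) :
    pdx F x y * u - pdy F x y * v = (I * f' * (u + v * I)).re := by
  have hx : HasDerivAt (fun z : ℂ => f (y + z * I)) (f' * I) x :=
    hf.comp (x : ℂ) ((hasDerivAt_mul_const I).const_add (y : ℂ))
  have hy : HasDerivAt (fun z : ℂ => f (z + x * I)) f' y := hf.comp_add_const
  simp only [pdx, pdy, hF, hx.real_of_complex.deriv, hy.real_of_complex.deriv]
  simp only [mul_re, mul_im, add_re, add_im, I_re, I_im, ofReal_re, ofReal_im]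
  ring

theorem hasDerivAt_neg_I_pow_mul_pow_div_factorial (m k : ℕ) (z : ℂ) :
    HasDerivAt (fun z : ℂ => (-I) ^ m * z ^ (k + 1) / (k + 1)!) ((-I) ^ m * z ^ k / k !) z := by
  refine (((hasDerivAt_pow (k + 1) z).const_mul ((-I) ^ m)).div_const _).congr_deriv ?_
  have : (k ! : ℂ) ≠ 0 := by exact_mod_cast (factorial_pos k).ne'
  push_cast [factorial_succ, Nat.add_sub_cancel]
  field_simp

section Curve

variable {U : Set ℝ} {r s : ℝ → ℝ}

theorem iteratedDeriv_re_pow_mul_self (hU : IsOpen U) {a : ℝ} (ha : a ∈ U) {w : ℝ → ℂ}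
    (hw : ContDiffOn ℝ ∞ w U) (hwa : w a = 0) (j : ℕ) {u : ℝ → ℂ} (hu : ContDiffOn ℝ ∞ u U) :
    iteratedDeriv j (fun t => (w t ^ j * u t).re) a = (j ! * deriv w a ^ j * u a).re := by
  rw [← iteratedDeriv_pow_mul_self hU ha hw hwa j hu]
  exact reCLM.iteratedDeriv_comp_left
    ((((hw.pow j).mul hu).contDiffAt (hU.mem_nhds ha)).of_le (by exact_mod_cast le_top))

theorem contDiffOn_ofReal_add_ofReal_mul_I (hr : ContDiffOn ℝ ∞ r U) (hs : ContDiffOn ℝ ∞ s U) :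
    ContDiffOn ℝ ∞ (fun t => (s t : ℂ) + r t * I) U :=
  (ofRealCLM.contDiff.comp_contDiffOn hs).add
    ((ofRealCLM.contDiff.comp_contDiffOn hr).mul contDiffOn_const)

theorem deriv_ofReal_add_ofReal_mul_I {t : ℝ} (hr : DifferentiableAt ℝ r t)
    (hs : DifferentiableAt ℝ s t) :
    deriv (fun t => (s t : ℂ) + r t * I) t = deriv s t + deriv r t * I :=
  (hs.hasDerivAt.ofReal_comp.add (hr.hasDerivAt.ofReal_comp.mul_const I)).deriv

theorem gcoef_eq (hU : IsOpen U) (h0 : (0 : ℝ) ∈ U) (hr : ContDiffOn ℝ ∞ r U)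
    (hs : ContDiffOn ℝ ∞ s U) (hr0 : r 0 = 0) (hs0 : s 0 = 0) {m n N : ℕ} (hm : m ≤ 1)
    (hN : m + n = N) :
    gcoef r s m n N = ((-I) ^ m * (deriv s 0 + deriv r 0 * I) ^ N).re / N ! := by
  have hG : (fun t => G m n (r t) (s t)) =
      fun t => (((s t : ℂ) + r t * I) ^ N * ((-I) ^ m / N !)).re := by
    funext t
    rw [G_eq_re hm, hN, mul_comm, mul_div_assoc]
  have : (N ! : ℂ) ≠ 0 := by exact_mod_cast (factorial_pos N).ne'
  rw [gcoef, hG, iteratedDeriv_re_pow_mul_self hU h0 (contDiffOn_ofReal_add_ofReal_mul_I hr hs)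
    (by simp [hr0, hs0]) N contDiffOn_const, deriv_ofReal_add_ofReal_mul_I
    ((hr.differentiableOn (by simp)).differentiableAt (hU.mem_nhds h0))
    ((hs.differentiableOn (by simp)).differentiableAt (hU.mem_nhds h0)),
    one_div_mul_eq_div]
  congr 2
  field_simp

theorem gtcoef_eq (hU : IsOpen U) (h0 : (0 : ℝ) ∈ U) (hr : ContDiffOn ℝ ∞ r U)
    (hs : ContDiffOn ℝ ∞ s U) (hr0 : r 0 = 0) (hs0 : s 0 = 0) (a₀ : ℝ) {m n k : ℕ} (hm : m ≤ 1)
    (hN : m + n = k + 1) :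
    gtcoef a₀ r s m n k =
      a₀ * (I * (-I) ^ m * (deriv s 0 + deriv r 0 * I) ^ (k + 1)).re / k ! := by
  have hG : (fun t => pdx (G m n) (r t) (s t) * deriv s t - pdy (G m n) (r t) (s t) * deriv r t) =
      fun t => (((s t : ℂ) + r t * I) ^ k *
        (I * (-I) ^ m / k ! * (deriv s t + deriv r t * I))).re := by
    funext t
    rw [pdx_mul_sub_pdy_mul_eq_re (fun x y => by rw [G_eq_re hm, hN])
      (hasDerivAt_neg_I_pow_mul_pow_div_factorial m k _)]
    ring_nf
  have hu : ContDiffOn ℝ ∞ (fun t => I * (-I) ^ m / k ! * (deriv s t + deriv r t * I)) U :=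
    contDiffOn_const.mul (contDiffOn_ofReal_add_ofReal_mul_I (hr.deriv_of_isOpen hU le_rfl)
      (hs.deriv_of_isOpen hU le_rfl))
  have : (k ! : ℂ) ≠ 0 := by exact_mod_cast (factorial_pos k).ne'
  rw [gtcoef, hG, iteratedDeriv_re_pow_mul_self hU h0 (contDiffOn_ofReal_add_ofReal_mul_I hr hs)
    (by simp [hr0, hs0]) k hu, deriv_ofReal_add_ofReal_mul_I
    ((hr.differentiableOn (by simp)).differentiableAt (hU.mem_nhds h0))
    ((hs.differentiableOn (by simp)).differentiableAt (hU.mem_nhds h0)), div_mul_eq_mul_div]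
  congr 3
  field_simp
  ring

end Curve

/-- For a regular smooth parameterization through the origin and `a₀ > 0`, the
determinant `g_{0,p,p}·g̃_{1,p-1,p-1} - g_{1,p-1,p}·g̃_{0,p,p-1}` is positive
for every `p = 1,…,M`. -/
theorem transmission_determinant_pos (M : ℕ) (ε a₀ : ℝ) (hε : 0 < ε) (ha : 0 < a₀)
    (r s : ℝ → ℝ)
    (hr : ContDiffOn ℝ (⊤ : ℕ∞) r (Set.Ioo (-ε) ε))
    (hs : ContDiffOn ℝ (⊤ : ℕ∞) s (Set.Ioo (-ε) ε))
    (hr0 : r 0 = 0) (hs0 : s 0 = 0)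
    (hreg : 0 < (deriv r 0) ^ 2 + (deriv s 0) ^ 2) :
    ∀ p : ℕ, 1 ≤ p → p ≤ M →
      0 < gcoef r s 0 p p * gtcoef a₀ r s 1 (p - 1) (p - 1) -
            gcoef r s 1 (p - 1) p * gtcoef a₀ r s 0 p (p - 1) := by
  intro p hp _
  have h0 : (0 : ℝ) ∈ Set.Ioo (-ε) ε := ⟨neg_neg_of_pos hε, hε⟩
  have hp' : p - 1 + 1 = p := Nat.sub_add_cancel hp
  rw [gcoef_eq isOpen_Ioo h0 hr hs hr0 hs0 zero_le_one (zero_add p),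
    gcoef_eq isOpen_Ioo h0 hr hs hr0 hs0 le_rfl (by omega),
    gtcoef_eq isOpen_Ioo h0 hr hs hr0 hs0 a₀ le_rfl (by omega),
    gtcoef_eq isOpen_Ioo h0 hr hs hr0 hs0 a₀ zero_le_one (by omega), hp']
  set z : ℂ := (deriv s 0 + deriv r 0 * I) ^ p
  have hz : 0 < normSq z := by
    rw [map_pow, normSq_add_mul_I]
    exact pow_pos (by linarith) p
  have hdet : ((-I) ^ 0 * z).re / p ! * (a₀ * (I * (-I) ^ 1 * z).re / (p - 1)!) -
      ((-I) ^ 1 * z).re / p ! * (a₀ * (I * (-I) ^ 0 * z).re / (p - 1)!) =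
      a₀ * normSq z / (p ! * (p - 1)!) := by
    simp only [pow_zero, pow_one, one_mul, mul_one, mul_neg, I_mul_I, neg_neg, neg_mul, neg_re,
      I_mul_re, normSq_apply]
    ring
  rw [hdet]
  exact div_pos (mul_pos ha hz) (by positivity)
end
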